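/- arXiv:2304.06783 — 3 statements merged into one kernel-verified Lean document; each statement's English description precedes it below -/
import Mathlib

section
/- Let r > 0, let P₀ be a Borel probability measure on ℝ^d with finite second moment M₀ = E_{P₀}[w wᵀ] that is absolutely continuous with respect to Lebesgue measure, let C ∈ ℝ^{d×d} be symmetric with λ_max(C) ≠ 0, and let γ* ≥ 0 satisfy γ* I − C ≻ 0 and Tr( (γ*(γ* I − C)^{-1} − I)² M₀ ) = r². Let P* be the pushforward of P₀ under w ↦ γ*(γ* I − C)^{-1} w. Then W₂(P*, P₀) = r; in particular, P* is an extremal point of the Wasserstein ball of radius r centered at P₀. -/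
open Matrix MeasureTheory
open scoped ENNReal

/-- The nonnegative part of an extended real, as an extended nonnegative real. -/
noncomputable def erealToENNReal (x : EReal) : ℝ≥0∞ :=
  if x = ⊤ then ⊤ else ENNReal.ofReal x.toReal

/-- Expectation of an extended-real-valued function, interpreted in the extended reals
as (integral of positive part) minus (integral of negative part). -/
noncomputable def eexpE {α : Type*} [MeasurableSpace α] (P : Measure α) (g : α → EReal) :
    EReal :=
  ((∫⁻ w, erealToENNReal (g w) ∂P : ℝ≥0∞) : EReal)
    - ((∫⁻ w, erealToENNReal (-(g w)) ∂P : ℝ≥0∞) : EReal)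

/-- Squared type-2 Wasserstein distance between Borel measures on `ℝ^d`:
`W₂(P₁,P₂)² = inf_{π ∈ Π(P₁,P₂)} ∫ ‖z₁ − z₂‖² dπ`. -/
noncomputable def W2sq {d : ℕ} (P₁ P₂ : Measure (Fin d → ℝ)) : ℝ≥0∞ :=
  ⨅ (π : Measure ((Fin d → ℝ) × (Fin d → ℝ))) (_ : π.map Prod.fst = P₁)
    (_ : π.map Prod.snd = P₂), ∫⁻ z, ENNReal.ofReal (∑ i, (z.1 i - z.2 i) ^ 2) ∂π

/-- The ambiguity set: Borel probability measures on `ℝ^d` with finite second moment within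
type-2 Wasserstein distance `r` of the nominal distribution `P₀`. -/
def ambiguitySet {d : ℕ} (P₀ : Measure (Fin d → ℝ)) (r : ℝ) :
    Set (Measure (Fin d → ℝ)) :=
  {P | IsProbabilityMeasure P ∧ Integrable (fun w => ∑ i, (w i) ^ 2) P ∧
    W2sq P P₀ ≤ ENNReal.ofReal (r ^ 2)}

/-- The largest eigenvalue of a (symmetric) real matrix. -/
noncomputable def lambdaMax {d : ℕ} (C : Matrix (Fin d) (Fin d) ℝ) : ℝ :=
  sSup {t : ℝ | ∃ v : Fin d → ℝ, v ≠ 0 ∧ C.mulVec v = t • v}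

/-- `φ(γ, w) := inf_z { γ‖z − w‖² − f(z) }`, valued in `ℝ ∪ {−∞} ⊆ EReal`. -/
noncomputable def phiDual {d : ℕ} (f : (Fin d → ℝ) → ℝ) (γ : ℝ) (w : Fin d → ℝ) : EReal :=
  ⨅ z : Fin d → ℝ, ((γ * ∑ i, (z i - w i) ^ 2 - f z : ℝ) : EReal)


section Helpers


variable {d : ℕ}

lemma measurable_mulVec' (A : Matrix (Fin d) (Fin d) ℝ) :
    Measurable fun w : Fin d → ℝ => A.mulVec w := by
  apply measurable_pi_lambda
  intro i
  simp only [Matrix.mulVec, dotProduct]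
  exact Finset.measurable_sum _ fun j _ => (measurable_pi_apply j).const_mul _

lemma quad_eq_sum (B : Matrix (Fin d) (Fin d) ℝ) (w : Fin d → ℝ) :
    w ⬝ᵥ B.mulVec w = ∑ i, ∑ j, B i j * (w i * w j) := by
  simp only [dotProduct, Matrix.mulVec, Finset.mul_sum]
  refine Finset.sum_congr rfl fun i _ => Finset.sum_congr rfl fun j _ => by ring

lemma measurable_quad (B : Matrix (Fin d) (Fin d) ℝ) :
    Measurable fun w : Fin d → ℝ => w ⬝ᵥ B.mulVec w := by
  simp only [quad_eq_sum]
  exact Finset.measurable_sum _ fun i _ => Finset.measurable_sum _ fun j _ =>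
    ((measurable_pi_apply i).mul (measurable_pi_apply j)).const_mul _

lemma quad_integrable (P₀ : Measure (Fin d → ℝ))
    (hmom : ∀ i j, Integrable (fun w => w i * w j) P₀) (B : Matrix (Fin d) (Fin d) ℝ) :
    Integrable (fun w : Fin d → ℝ => w ⬝ᵥ B.mulVec w) P₀ := by
  simp only [quad_eq_sum]
  exact integrable_finset_sum _ fun i _ => integrable_finset_sum _ fun j _ =>
    (hmom i j).const_mul _

lemma quad_integral (P₀ : Measure (Fin d → ℝ))
    (hmom : ∀ i j, Integrable (fun w => w i * w j) P₀)
    (M₀ : Matrix (Fin d) (Fin d) ℝ)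
    (hM₀ : M₀ = Matrix.of fun i j => ∫ w, w i * w j ∂P₀)
    (B : Matrix (Fin d) (Fin d) ℝ) :
    ∫ w, w ⬝ᵥ B.mulVec w ∂P₀ = (B * M₀).trace := by
  simp only [quad_eq_sum]
  rw [show (∫ w, ∑ i, ∑ j, B i j * (w i * w j) ∂P₀) = ∑ i, ∫ w, ∑ j, B i j * (w i * w j) ∂P₀ from
    integral_finset_sum _ fun i _ => integrable_finset_sum _ fun j _ => (hmom i j).const_mul _]
  have : ∀ i ∈ Finset.univ, ∫ w, ∑ j, B i j * (w i * w j) ∂P₀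
      = ∑ j, B i j * ∫ w, w i * w j ∂P₀ := by
    intro i _
    rw [integral_finset_sum _ fun j _ => (hmom i j).const_mul _]
    exact Finset.sum_congr rfl fun j _ => integral_const_mul _ _
  rw [Finset.sum_congr rfl this]
  simp only [Matrix.trace, Matrix.diag, Matrix.mul_apply, hM₀, Matrix.of_apply]
  refine Finset.sum_congr rfl fun i _ => Finset.sum_congr rfl fun j _ => ?_
  congr 1
  exact integral_congr_ae (Filter.Eventually.of_forall fun w => mul_comm _ _)

lemma dot_mulVec_left (A : Matrix (Fin d) (Fin d) ℝ) (v x : Fin d → ℝ) :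
    v ⬝ᵥ A.mulVec x = (Aᵀ.mulVec v) ⬝ᵥ x := by
  rw [dotProduct_mulVec, ← Matrix.mulVec_transpose]

lemma dot_symm (M : Matrix (Fin d) (Fin d) ℝ) (hM : Mᵀ = M) (x y : Fin d → ℝ) :
    x ⬝ᵥ M.mulVec y = M.mulVec x ⬝ᵥ y := by
  rw [dot_mulVec_left, hM]

lemma sum_sq_mulVec (B : Matrix (Fin d) (Fin d) ℝ) (w : Fin d → ℝ) :
    ∑ i, (B.mulVec w i) ^ 2 = w ⬝ᵥ (Bᵀ * B).mulVec w := by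
  have h1 : ∑ i, (B.mulVec w i) ^ 2 = (B.mulVec w) ⬝ᵥ (B.mulVec w) := by
    simp [dotProduct, sq]
  rw [h1]
  conv_rhs => rw [← Matrix.mulVec_mulVec, dot_mulVec_left, Matrix.transpose_transpose]

lemma one_quad (z : Fin d → ℝ) :
    z ⬝ᵥ (1 : Matrix (Fin d) (Fin d) ℝ).mulVec z = ∑ i, (z i) ^ 2 := by
  rw [Matrix.one_mulVec]; simp [dotProduct, sq]

lemma dot_conj (M N : Matrix (Fin d) (Fin d) ℝ) (w : Fin d → ℝ) :
    (N.mulVec w) ⬝ᵥ M.mulVec (N.mulVec w) = w ⬝ᵥ (Nᵀ * M * N).mulVec w := by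
  have h : w ⬝ᵥ (Nᵀ * M * N).mulVec w = (N.mulVec w) ⬝ᵥ (M * N).mulVec w := by
    rw [Matrix.mul_assoc, ← Matrix.mulVec_mulVec, dot_mulVec_left, Matrix.transpose_transpose]
  rw [Matrix.mulVec_mulVec, h]

lemma posdef_smul {M : Matrix (Fin d) (Fin d) ℝ} (hM : M.PosDef) {c : ℝ} (hc : 0 < c) :
    (c • M).PosDef := by
  refine Matrix.posDef_iff_dotProduct_mulVec.mpr ⟨?_, ?_⟩
  · show (c • M)ᴴ = c • M
    rw [Matrix.conjTranspose_smul, hM.1]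
    simp
  · intro x hx
    have h := hM.dotProduct_mulVec_pos hx
    show 0 < star x ⬝ᵥ (c • M).mulVec x
    rw [Matrix.smul_mulVec]
    simpa [smul_eq_mul] using mul_pos hc h

lemma young (A : Matrix (Fin d) (Fin d) ℝ) (hA : Aᵀ = A) (hApd : A.PosDef)
    (z₁ z₂ : Fin d → ℝ) :
    z₁ ⬝ᵥ ((1 : Matrix (Fin d) (Fin d) ℝ) - A⁻¹).mulVec z₁
      + z₂ ⬝ᵥ ((1 : Matrix (Fin d) (Fin d) ℝ) - A).mulVec z₂
      ≤ ∑ i, (z₁ i - z₂ i) ^ 2 := by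
  have hinv : A⁻¹.PosSemidef := hApd.inv.posSemidef
  have hdet : IsUnit A.det := isUnit_iff_ne_zero.mpr hApd.det_pos.ne'
  have hinvT : A⁻¹ᵀ = A⁻¹ := by rw [Matrix.transpose_nonsing_inv, hA]
  have key : 0 ≤ (z₁ - A.mulVec z₂) ⬝ᵥ A⁻¹.mulVec (z₁ - A.mulVec z₂) := by
    simpa using hinv.dotProduct_mulVec_nonneg (z₁ - A.mulVec z₂)
  have hAAinv : A⁻¹ * A = 1 := Matrix.nonsing_inv_mul A hdet
  have h2 : A⁻¹.mulVec (A.mulVec z₂) = z₂ := by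
    rw [Matrix.mulVec_mulVec, hAAinv, Matrix.one_mulVec]
  have h3 : (A.mulVec z₂) ⬝ᵥ A⁻¹.mulVec z₁ = z₂ ⬝ᵥ z₁ := by
    rw [dot_symm A⁻¹ hinvT, h2]
  have e1 : (z₁ - A.mulVec z₂) ⬝ᵥ A⁻¹.mulVec (z₁ - A.mulVec z₂)
      = z₁ ⬝ᵥ A⁻¹.mulVec z₁ - 2 * (z₁ ⬝ᵥ z₂) + z₂ ⬝ᵥ A.mulVec z₂ := by
    rw [Matrix.mulVec_sub, dotProduct_sub, sub_dotProduct, sub_dotProduct,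
      h2, h3, dotProduct_comm (A.mulVec z₂) z₂, dotProduct_comm z₂ z₁]
    ring
  have s1 : ∑ i, (z₁ i - z₂ i) ^ 2
      = (∑ i, (z₁ i) ^ 2) - 2 * (z₁ ⬝ᵥ z₂) + ∑ i, (z₂ i) ^ 2 := by
    simp only [dotProduct, Finset.mul_sum, ← Finset.sum_add_distrib,
      ← Finset.sum_sub_distrib]
    exact Finset.sum_congr rfl fun i _ => by ring
  have g1 : z₁ ⬝ᵥ ((1 : Matrix (Fin d) (Fin d) ℝ) - A⁻¹).mulVec z₁
      = (∑ i, (z₁ i) ^ 2) - z₁ ⬝ᵥ A⁻¹.mulVec z₁ := by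
    rw [Matrix.sub_mulVec, dotProduct_sub, one_quad]
  have g2 : z₂ ⬝ᵥ ((1 : Matrix (Fin d) (Fin d) ℝ) - A).mulVec z₂
      = (∑ i, (z₂ i) ^ 2) - z₂ ⬝ᵥ A.mulVec z₂ := by
    rw [Matrix.sub_mulVec, dotProduct_sub, one_quad]
  linarith [key, e1, s1, g1, g2]


end Helpers

/-- under the assumptions of the worst-case-distribution theorem, the
pushforward `P*` of `P₀` under `w ↦ γ*(γ*I−C)⁻¹w` satisfies `W₂(P*, P₀) = r`; in
particular, `P*` is an extremal point of the Wasserstein ball of radius `r` around `P₀`. -/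
theorem stmt12 {d : ℕ} (hd : 0 < d) (r : ℝ) (hr : 0 < r)
    (P₀ : Measure (Fin d → ℝ)) [IsProbabilityMeasure P₀]
    (hac : P₀ ≪ (volume : Measure (Fin d → ℝ)))
    (hmom : ∀ i j, Integrable (fun w => w i * w j) P₀)
    (M₀ : Matrix (Fin d) (Fin d) ℝ)
    (hM₀ : M₀ = Matrix.of fun i j => ∫ w, w i * w j ∂P₀)
    (C : Matrix (Fin d) (Fin d) ℝ) (hC : C.IsSymm) (hlmax : lambdaMax C ≠ 0)
    (γs : ℝ) (hγs : 0 ≤ γs)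
    (hpd : (γs • (1 : Matrix (Fin d) (Fin d) ℝ) - C).PosDef)
    (htr : ((γs • (γs • (1 : Matrix (Fin d) (Fin d) ℝ) - C)⁻¹ - 1) ^ 2 * M₀).trace = r ^ 2)
    (Pstar : Measure (Fin d → ℝ))
    (hPstar : Pstar
      = P₀.map (fun w => (γs • (γs • (1 : Matrix (Fin d) (Fin d) ℝ) - C)⁻¹).mulVec w)) :
    W2sq Pstar P₀ = ENNReal.ofReal (r ^ 2) := by
  classical
  set A : Matrix (Fin d) (Fin d) ℝ := γs • (γs • (1 : Matrix (Fin d) (Fin d) ℝ) - C)⁻¹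
    with hAdef
  have hBsymm : (γs • (1 : Matrix (Fin d) (Fin d) ℝ) - C)ᵀ
      = γs • (1 : Matrix (Fin d) (Fin d) ℝ) - C := by
    rw [Matrix.transpose_sub, Matrix.transpose_smul, Matrix.transpose_one, hC]
  have hAsymm : Aᵀ = A := by
    rw [hAdef, Matrix.transpose_smul, Matrix.transpose_nonsing_inv, hBsymm]
  have hcase : A.PosDef ∨ A = 0 := by
    rcases lt_or_eq_of_le hγs with hpos | h0
    · exact Or.inl (posdef_smul hpd.inv hpos)
    · exact Or.inr (by rw [hAdef, ← h0, zero_smul])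
  have hAAA : A * A⁻¹ * A = A := by
    rcases hcase with hApd | h0
    · rw [Matrix.mul_nonsing_inv _ (isUnit_iff_ne_zero.mpr hApd.det_pos.ne'), one_mul]
    · rw [h0]; simp
  have hT : Measurable fun w : Fin d → ℝ => A.mulVec w := measurable_mulVec' A
  have hA1symm : (A - 1)ᵀ = A - 1 := by
    rw [Matrix.transpose_sub, hAsymm, Matrix.transpose_one]
  have hfid : ∀ w : Fin d → ℝ,
      ∑ i, (A.mulVec w i - w i) ^ 2 = w ⬝ᵥ ((A - 1) ^ 2).mulVec w := by
    intro w
    have h : ∀ i, A.mulVec w i - w i = (A - 1).mulVec w i := by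
      intro i; rw [Matrix.sub_mulVec, Matrix.one_mulVec]; rfl
    simp_rw [h]
    rw [sum_sq_mulVec, hA1symm, sq]
  have hint2 : Integrable (fun w => w ⬝ᵥ ((A - 1) ^ 2).mulVec w) P₀ := quad_integrable P₀ hmom _
  -- the matrix identity for the pushed-forward quadratic form
  have hmat : Aᵀ * ((1 : Matrix (Fin d) (Fin d) ℝ) - A⁻¹) * A = A ^ 2 - A := by
    rw [hAsymm, Matrix.mul_sub, Matrix.mul_one, Matrix.sub_mul, hAAA, ← pow_two]
  set g : (Fin d → ℝ) → ℝ := fun z => z ⬝ᵥ ((1 : Matrix (Fin d) (Fin d) ℝ) - A⁻¹).mulVec z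
    with hgdef
  set h : (Fin d → ℝ) → ℝ := fun z => z ⬝ᵥ ((1 : Matrix (Fin d) (Fin d) ℝ) - A).mulVec z
    with hhdef
  have hgmeas : Measurable g := measurable_quad _
  have hhmeas : Measurable h := measurable_quad _
  have hgcomp : (fun w => g (A.mulVec w)) = fun w => w ⬝ᵥ (A ^ 2 - A).mulVec w := by
    funext w
    rw [hgdef]
    simp only []
    rw [dot_conj, hmat]
  have hgPstar : Integrable g Pstar := by
    rw [hPstar]
    refine (integrable_map_measure hgmeas.aestronglyMeasurable hT.aemeasurable).mpr ?_
    have : (g ∘ fun w => A.mulVec w) = fun w => w ⬝ᵥ (A ^ 2 - A).mulVec w := hgcomp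
    rw [this]
    exact quad_integrable P₀ hmom _
  have hgint : ∫ z, g z ∂Pstar = ((A ^ 2 - A) * M₀).trace := by
    rw [hPstar, integral_map hT.aemeasurable hgmeas.aestronglyMeasurable]
    calc ∫ w, g (A.mulVec w) ∂P₀ = ∫ w, w ⬝ᵥ (A ^ 2 - A).mulVec w ∂P₀ := by rw [hgcomp]
      _ = _ := quad_integral P₀ hmom M₀ hM₀ _
  have hhP₀ : Integrable h P₀ := quad_integrable P₀ hmom _
  have hhint : ∫ z, h z ∂P₀ = (((1 : Matrix (Fin d) (Fin d) ℝ) - A) * M₀).trace :=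
    quad_integral P₀ hmom M₀ hM₀ _
  have htrsum : ((A ^ 2 - A) * M₀).trace
      + (((1 : Matrix (Fin d) (Fin d) ℝ) - A) * M₀).trace = r ^ 2 := by
    rw [← Matrix.trace_add, ← Matrix.add_mul, ← htr]
    congr 2
    noncomm_ring
  refine le_antisymm ?_ ?_
  · -- upper bound via the explicit coupling
    set π₀ := P₀.map (fun w => (A.mulVec w, w)) with hπ₀
    have hm0 : Measurable fun w : Fin d → ℝ => (A.mulVec w, w) := hT.prodMk measurable_id
    have hfst : π₀.map Prod.fst = Pstar := by
      rw [hπ₀, Measure.map_map measurable_fst hm0, hPstar]; rfl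
    have hsnd : π₀.map Prod.snd = P₀ := by
      rw [hπ₀, Measure.map_map measurable_snd hm0]
      exact Measure.map_id
    have hmeasF : Measurable fun z : (Fin d → ℝ) × (Fin d → ℝ) =>
        ENNReal.ofReal (∑ i, (z.1 i - z.2 i) ^ 2) := by
      apply Measurable.ennreal_ofReal
      exact Finset.measurable_sum _ fun i _ =>
        (((measurable_pi_apply i).comp measurable_fst).sub
          ((measurable_pi_apply i).comp measurable_snd)).pow_const 2
    have hcost : ∫⁻ z, ENNReal.ofReal (∑ i, (z.1 i - z.2 i) ^ 2) ∂π₀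
        = ENNReal.ofReal (r ^ 2) := by
      rw [hπ₀, lintegral_map hmeasF hm0]
      calc ∫⁻ w, ENNReal.ofReal (∑ i, (A.mulVec w i - w i) ^ 2) ∂P₀
          = ∫⁻ w, ENNReal.ofReal (w ⬝ᵥ ((A - 1) ^ 2).mulVec w) ∂P₀ := by simp_rw [hfid]
        _ = ENNReal.ofReal (∫ w, w ⬝ᵥ ((A - 1) ^ 2).mulVec w ∂P₀) :=
            (ofReal_integral_eq_lintegral_ofReal hint2
              (Filter.Eventually.of_forall fun w => by
                simp only [Pi.zero_apply]
                rw [← hfid w]; exact Finset.sum_nonneg fun i _ => sq_nonneg _)).symm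
        _ = ENNReal.ofReal (r ^ 2) := by rw [quad_integral P₀ hmom M₀ hM₀, htr]
    calc W2sq Pstar P₀ ≤ ∫⁻ z, ENNReal.ofReal (∑ i, (z.1 i - z.2 i) ^ 2) ∂π₀ := by
          refine iInf_le_of_le π₀ ?_
          rw [iInf_pos hfst, iInf_pos hsnd]
      _ = _ := hcost
  · -- lower bound
    refine le_iInf fun π => le_iInf fun h1 => le_iInf fun h2 => ?_
    by_cases htop : ∫⁻ z, ENNReal.ofReal (∑ i, (z.1 i - z.2 i) ^ 2) ∂π = ⊤
    · rw [htop]; exact le_top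
    set F : (Fin d → ℝ) × (Fin d → ℝ) → ℝ := fun z => ∑ i, (z.1 i - z.2 i) ^ 2 with hF
    have hFmeas : Measurable F := Finset.measurable_sum _ fun i _ =>
      (((measurable_pi_apply i).comp measurable_fst).sub
        ((measurable_pi_apply i).comp measurable_snd)).pow_const 2
    have hFnn : ∀ z, 0 ≤ F z := fun z => Finset.sum_nonneg fun i _ => sq_nonneg _
    have hFint : Integrable F π := by
      refine ⟨hFmeas.aestronglyMeasurable, ?_⟩
      rw [hasFiniteIntegral_iff_ofReal (Filter.Eventually.of_forall hFnn)]
      exact lt_top_iff_ne_top.mpr htop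
    have hGfst : Integrable (fun z : (Fin d → ℝ) × (Fin d → ℝ) => g z.1) π := by
      have h' : Integrable g (π.map Prod.fst) := by rw [h1]; exact hgPstar
      exact (integrable_map_measure hgmeas.aestronglyMeasurable
        measurable_fst.aemeasurable).mp h'
    have hHsnd : Integrable (fun z : (Fin d → ℝ) × (Fin d → ℝ) => h z.2) π := by
      have h' : Integrable h (π.map Prod.snd) := by rw [h2]; exact hhP₀
      exact (integrable_map_measure hhmeas.aestronglyMeasurable
        measurable_snd.aemeasurable).mp h'
    have hGfst_int : ∫ z, g z.1 ∂π = ((A ^ 2 - A) * M₀).trace := by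
      rw [← hgint, ← h1, integral_map measurable_fst.aemeasurable hgmeas.aestronglyMeasurable]
    have hHsnd_int : ∫ z, h z.2 ∂π = (((1 : Matrix (Fin d) (Fin d) ℝ) - A) * M₀).trace := by
      rw [← hhint, ← h2, integral_map measurable_snd.aemeasurable hhmeas.aestronglyMeasurable]
    have hae : ∀ᵐ z ∂π, g z.1 + h z.2 ≤ F z := by
      rcases hcase with hApd | h0
      · exact Filter.Eventually.of_forall fun z => young A hAsymm hApd z.1 z.2
      · have hPd : Pstar = Measure.dirac (0 : Fin d → ℝ) := by
          rw [hPstar, h0]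
          simp only [Matrix.zero_mulVec]
          rw [Measure.map_const, measure_univ, one_smul]
        have hz : ∀ᵐ z ∂π, z.1 = 0 := by
          rw [ae_iff]
          have hs : {z : (Fin d → ℝ) × (Fin d → ℝ) | ¬z.1 = 0}
              = Prod.fst ⁻¹' {x : Fin d → ℝ | x = 0}ᶜ := rfl
          rw [hs, ← Measure.map_apply measurable_fst measurableSet_eq.compl, h1, hPd]
          simp [Measure.dirac_apply' _ measurableSet_eq.compl]
        filter_upwards [hz] with z hz1
        simp only [hF, hgdef, hhdef, hz1, h0]
        rw [Matrix.mulVec_zero, dotProduct_zero, sub_zero, one_quad]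
        simp [zero_sub, neg_sq]
    rw [← ofReal_integral_eq_lintegral_ofReal hFint (Filter.Eventually.of_forall hFnn)]
    apply ENNReal.ofReal_le_ofReal
    calc r ^ 2 = ∫ z, (g z.1 + h z.2) ∂π := by
          rw [integral_add hGfst hHsnd, hGfst_int, hHsnd_int, htrsum]
      _ ≤ ∫ z, F z ∂π := integral_mono_ae (hGfst.add hHsnd) hFint hae
end

section
/- Let c ≥ 1. The gain k = 1/(1+c) minimizes sup_{ρ ∈ [−1,1]} Rg(k, ρ) over all k ∈ ℝ, and the minimax value equals 1/(1+c). Moreover, the expected regret of the gain k = 1/(1+c) is constant over the ambiguity set: Rg(1/(1+c), ρ) = 1/(1+c) for every ρ ∈ [−1, 1]. -/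
/-- For `c ≥ 1`, the gain `k = 1/(1+c)` minimizes
`sup_{ρ ∈ [−1,1]} Rg(k,ρ)` over all `k ∈ ℝ`, the minimax value equals `1/(1+c)`,
and the expected regret of this gain is constant equal to `1/(1+c)` over the ambiguity set. -/
theorem stmt17 (c : ℝ) (hc : 1 ≤ c)
    (f : ℝ → ℝ → ℝ) (Jstar : ℝ → ℝ) (Rg : ℝ → ℝ → ℝ)
    (hf : ∀ k ρ, f k ρ = (1 + c) * k ^ 2 - 2 * (1 + ρ) * k + 2 + 2 * ρ)
    (hJ : ∀ ρ, Jstar ρ = 2 * c * (1 + ρ) / (1 + c))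
    (hR : ∀ k ρ, Rg k ρ = f k ρ - Jstar ρ) :
    (∀ k : ℝ, sSup (Rg (1 / (1 + c)) '' Set.Icc (-1 : ℝ) 1)
        ≤ sSup (Rg k '' Set.Icc (-1 : ℝ) 1)) ∧
      sSup (Rg (1 / (1 + c)) '' Set.Icc (-1 : ℝ) 1) = 1 / (1 + c) ∧
      ∀ ρ ∈ Set.Icc (-1 : ℝ) 1, Rg (1 / (1 + c)) ρ = 1 / (1 + c) := by
  have hc1 : (0:ℝ) < 1 + c := by linarith
  have hne : (1 + c) ≠ 0 := ne_of_gt hc1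
  have hconst : ∀ ρ : ℝ, Rg (1 / (1 + c)) ρ = 1 / (1 + c) := by
    intro ρ
    rw [hR, hf, hJ]
    field_simp
    ring_nf
  have himg : Rg (1 / (1 + c)) '' Set.Icc (-1 : ℝ) 1 = {1 / (1 + c)} := by
    ext x
    simp only [Set.mem_image, Set.mem_singleton_iff]
    constructor
    · rintro ⟨ρ, hρ, rfl⟩; exact hconst ρ
    · rintro rfl; exact ⟨0, by norm_num, hconst 0⟩
  have hsup_star : sSup (Rg (1 / (1 + c)) '' Set.Icc (-1 : ℝ) 1) = 1 / (1 + c) := by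
    rw [himg, csSup_singleton]
  refine ⟨?_, hsup_star, fun ρ _ => hconst ρ⟩
  intro k
  rw [hsup_star]
  have e : ∀ ρ : ℝ, Rg k ρ =
      ((1 + c) * k ^ 2 - 2 * k + 2 - 2 * c / (1 + c)) + (2 - 2 * k - 2 * c / (1 + c)) * ρ := by
    intro ρ
    rw [hR, hf, hJ]
    field_simp
    ring
  have hbdd : BddAbove (Rg k '' Set.Icc (-1 : ℝ) 1) := by
    refine ⟨((1 + c) * k ^ 2 - 2 * k + 2 - 2 * c / (1 + c)) + |2 - 2 * k - 2 * c / (1 + c)|, ?_⟩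
    rintro x ⟨ρ, hρ, rfl⟩
    rw [e]
    have hrabs : |ρ| ≤ 1 := abs_le.mpr ⟨hρ.1, hρ.2⟩
    have : (2 - 2 * k - 2 * c / (1 + c)) * ρ ≤ |2 - 2 * k - 2 * c / (1 + c)| := by
      calc (2 - 2 * k - 2 * c / (1 + c)) * ρ ≤ |(2 - 2 * k - 2 * c / (1 + c)) * ρ| :=
            le_abs_self _
        _ = |2 - 2 * k - 2 * c / (1 + c)| * |ρ| := abs_mul _ _
        _ ≤ |2 - 2 * k - 2 * c / (1 + c)| * 1 := by
            exact mul_le_mul_of_nonneg_left hrabs (abs_nonneg _)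
        _ = |2 - 2 * k - 2 * c / (1 + c)| := mul_one _
    linarith
  have hm1 : Rg k 1 ∈ Rg k '' Set.Icc (-1 : ℝ) 1 := ⟨1, by norm_num, rfl⟩
  have hm2 : Rg k (-1) ∈ Rg k '' Set.Icc (-1 : ℝ) 1 := ⟨-1, by norm_num, rfl⟩
  rcases le_or_gt k (1 / (1 + c)) with h | h
  · have hfac : Rg k 1 - 1 / (1 + c) = (1 + c) * (k - 1 / (1 + c)) * (k - 3 / (1 + c)) := by
      rw [e]
      field_simp
      ring
    have h3 : k ≤ 3 / (1 + c) := by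
      have : (1:ℝ) / (1 + c) ≤ 3 / (1 + c) := by
        gcongr
        norm_num
      linarith
    have hpos : 0 ≤ (1 + c) * (k - 1 / (1 + c)) * (k - 3 / (1 + c)) := by
      have h1 : k - 1 / (1 + c) ≤ 0 := by linarith
      have h2 : k - 3 / (1 + c) ≤ 0 := by linarith
      have hprod : 0 ≤ (k - 1 / (1 + c)) * (k - 3 / (1 + c)) := by nlinarith [h1, h2]
      rw [mul_assoc]
      exact mul_nonneg hc1.le hprod
    have : 1 / (1 + c) ≤ Rg k 1 := by linarith
    exact this.trans (le_csSup hbdd hm1)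
  · have hRm1 : Rg k (-1) = (1 + c) * k ^ 2 := by
      rw [e]; field_simp; ring
    have hkpos : 0 < 1 / (1 + c) := by positivity
    have : 1 / (1 + c) ≤ Rg k (-1) := by
      rw [hRm1, div_le_iff₀ hc1]
      have hk1 : 1 < k * (1 + c) := by
        rw [div_lt_iff₀ hc1] at h; linarith
      nlinarith [hk1]
    exact this.trans (le_csSup hbdd hm2)
end

section
/- Let c ≥ 1. The gain k = 2/(1+c) minimizes sup_{ρ ∈ [−1,1]} f(k, ρ) over all k ∈ ℝ, with minimax value 4c/(1+c). Moreover, for every ρ ∈ [−1, 1], the expected cost of the gain k = 2/(1+c) equals f(2/(1+c), ρ) = 2c(1+ρ)/(1+c) + 2(1−ρ)/(1+c). -/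
/-- For `c ≥ 1`, the gain `k = 2/(1+c)` minimizes
`sup_{ρ ∈ [−1,1]} f(k,ρ)` over all `k ∈ ℝ`, with minimax value `4c/(1+c)`; moreover, for every
`ρ ∈ [−1,1]`, `f(2/(1+c), ρ) = 2c(1+ρ)/(1+c) + 2(1−ρ)/(1+c)`. -/
theorem stmt18 (c : ℝ) (hc : 1 ≤ c)
    (f : ℝ → ℝ → ℝ)
    (hf : ∀ k ρ, f k ρ = (1 + c) * k ^ 2 - 2 * (1 + ρ) * k + 2 + 2 * ρ) :
    (∀ k : ℝ, sSup (f (2 / (1 + c)) '' Set.Icc (-1 : ℝ) 1)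
        ≤ sSup (f k '' Set.Icc (-1 : ℝ) 1)) ∧
      sSup (f (2 / (1 + c)) '' Set.Icc (-1 : ℝ) 1) = 4 * c / (1 + c) ∧
      ∀ ρ ∈ Set.Icc (-1 : ℝ) 1,
        f (2 / (1 + c)) ρ = 2 * c * (1 + ρ) / (1 + c) + 2 * (1 - ρ) / (1 + c) := by
  have hpos : (0 : ℝ) < 1 + c := by linarith
  have hne : (1 + c) ≠ 0 := ne_of_gt hpos
  set k₀ : ℝ := 2 / (1 + c) with hk₀
  have hk₀le : k₀ ≤ 1 := by
    rw [hk₀, div_le_one hpos]; linarith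
  -- sup for k₀ is attained at ρ = 1
  have hgreat : IsGreatest (f k₀ '' Set.Icc (-1 : ℝ) 1) (f k₀ 1) := by
    constructor
    · exact ⟨1, by constructor <;> norm_num, rfl⟩
    · rintro y ⟨ρ, hρ, rfl⟩
      rw [hf, hf]
      have h1 := hρ.1
      have h2 := hρ.2
      nlinarith [mul_nonneg (sub_nonneg.2 hk₀le) (sub_nonneg.2 h2)]
  have hval : f k₀ 1 = 4 * c / (1 + c) := by
    rw [hf, hk₀]
    field_simp
    ring
  have hsup₀ : sSup (f k₀ '' Set.Icc (-1 : ℝ) 1) = 4 * c / (1 + c) := by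
    rw [hgreat.csSup_eq, hval]
  refine ⟨?_, hsup₀, ?_⟩
  · intro k
    rw [hsup₀]
    have hbdd : BddAbove (f k '' Set.Icc (-1 : ℝ) 1) := by
      refine ⟨max (f k (-1)) (f k 1), ?_⟩
      rintro y ⟨ρ, hρ, rfl⟩
      have h1 := hρ.1
      have h2 := hρ.2
      rcases le_total k 1 with hk | hk
      · refine le_max_of_le_right ?_
        rw [hf, hf]; nlinarith
      · refine le_max_of_le_left ?_
        rw [hf, hf]; nlinarith
    have hmem : f k 1 ∈ f k '' Set.Icc (-1 : ℝ) 1 :=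
      ⟨1, by constructor <;> norm_num, rfl⟩
    have hge : 4 * c / (1 + c) ≤ f k 1 := by
      rw [hf, div_le_iff₀ hpos]
      nlinarith [sq_nonneg ((1 + c) * k - 2)]
    exact hge.trans (le_csSup hbdd hmem)
  · intro ρ hρ
    rw [hf, hk₀]
    field_simp
    ring
end
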